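/- Let 𝒯 be a single-vertex triangulation of a closed oriented three-manifold, or an ideal triangulation of an oriented three-manifold with no spherical boundary components, and suppose 𝒯 has no degree one edges. Let e be an edge of degree two, let △ be a triangle incident to e with other edges e′ and e″, and suppose the two tetrahedra incident to e are also glued along edges ē′ and ē″ (so that e, e′, e″, ē′, ē″ are the edges of the two tetrahedra incident to e). Then each of the edges e′, e″, ē′, ē″ has degree at least three. -/

import Mathlib

/-!
Formalization framework for triangulations of three-manifolds
(Matveev/Piergallini-style triangulations, following Wheeler,
"Connectivity of triangulations without degree one edges under 2-3 and 3-2 moves").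

A triangulation is a finite family of oriented model tetrahedra together with
orientation-reversing face pairings; no face is glued to itself, faces may be left
unglued (boundary faces).  The face of a model tetrahedron opposite vertex `i` is
labelled `i`; a pairing of face `(t, i)` with face `(t', i')` is recorded together
with the induced simplicial vertex correspondence, extended to a permutation
`σ` of `Fin 4` with `σ i = i'`.  Since all model tetrahedra are identically
oriented, a face pairing is orientation-reversing exactly when `σ` is odd.
-/

namespace Paper

open Equiv

structure Tri : Type 1 where
  ι : Type
  fin : Fintype ι
  dec : DecidableEq ι
  glue : ι × Fin 4 → Option ((ι × Fin 4) × Perm (Fin 4))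
  glue_ne : ∀ F P, glue F = some P → P.1 ≠ F
  glue_symm : ∀ F F' σ, glue F = some (F', σ) → glue F' = some (F, σ⁻¹)
  glue_vertex : ∀ F F' σ, glue F = some (F', σ) → σ F.2 = F'.2
  glue_orient : ∀ F F' σ, glue F = some (F', σ) → Perm.sign σ = -1

attribute [instance] Tri.fin Tri.dec

/-- Every face is paired with another face (the complex has no boundary). -/
def Tri.Boundaryless (T : Tri) : Prop := ∀ F, T.glue F ≠ none

/-- An unordered pair of distinct vertex labels of a model tetrahedron. -/
def EdgePair : Type := {s : Finset (Fin 4) // s.card = 2}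

def epair (a b : Fin 4) (h : a ≠ b) : EdgePair := ⟨{a, b}, Finset.card_pair h⟩

def EdgePair.map (s : EdgePair) (π : Perm (Fin 4)) : EdgePair :=
  ⟨s.1.image π, by rw [Finset.card_image_of_injective _ π.injective, s.2]⟩

/-- A model edge: a model tetrahedron together with a pair of its vertices. -/
def Tri.ModelEdge (T : Tri) : Type := T.ι × EdgePair

/-- Two model edges are identified across a single face pairing. -/
def Tri.edgeAdj (T : Tri) : T.ModelEdge → T.ModelEdge → Prop := fun e f =>
  ∃ (i : Fin 4) (G : T.ι × Fin 4) (σ : Perm (Fin 4)),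
    i ∉ e.2.1 ∧ T.glue (e.1, i) = some (G, σ) ∧ f.1 = G.1 ∧ f.2.1 = e.2.1.image σ

/-- Edges of the triangulation: classes of model edges under the identifications. -/
def Tri.EdgeClass (T : Tri) : Type := Quot T.edgeAdj

def Tri.edgeOf (T : Tri) (e : T.ModelEdge) : T.EdgeClass := Quot.mk _ e

/-- The degree of an edge of the triangulation: the number of model edges
identified to form it. -/
noncomputable def Tri.degree (T : Tri) (E : T.EdgeClass) : ℕ :=
  Nat.card {e : T.ModelEdge // T.edgeOf e = E}

def Tri.HasDegOneEdge (T : Tri) : Prop := ∃ e : T.ModelEdge, T.degree (T.edgeOf e) = 1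

/-- An edge lying in an unglued (boundary) face. -/
def Tri.IsBoundaryEdge (T : Tri) (E : T.EdgeClass) : Prop :=
  ∃ (f : T.ModelEdge) (i : Fin 4), T.edgeOf f = E ∧ i ∉ f.2.1 ∧ T.glue (f.1, i) = none

/-- Identification of model vertices across a single face pairing. -/
def Tri.vertAdj (T : Tri) : T.ι × Fin 4 → T.ι × Fin 4 → Prop := fun v w =>
  ∃ (i : Fin 4) (G : T.ι × Fin 4) (σ : Perm (Fin 4)),
    i ≠ v.2 ∧ T.glue (v.1, i) = some (G, σ) ∧ w = (G.1, σ v.2)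

def Tri.VertClass (T : Tri) : Type := Quot T.vertAdj

noncomputable def Tri.vertexCount (T : Tri) : ℕ := Nat.card T.VertClass

/-! ### The underlying topological space -/

instance (T : Tri) : TopologicalSpace T.ι := ⊥

def Tri.Pt (T : Tri) : Type := T.ι × (stdSimplex ℝ (Fin 4))

instance (T : Tri) : TopologicalSpace T.Pt :=
  inferInstanceAs (TopologicalSpace (T.ι × (stdSimplex ℝ (Fin 4))))

/-- Identification of points of the disjoint union of the model tetrahedra
(in barycentric coordinates) induced by a face pairing. -/
def Tri.spaceRel (T : Tri) : T.Pt → T.Pt → Prop := fun p q =>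
  ∃ (i : Fin 4) (G : T.ι × Fin 4) (σ : Perm (Fin 4)),
    T.glue (p.1, i) = some (G, σ) ∧ (p.2 : Fin 4 → ℝ) i = 0 ∧
    q.1 = G.1 ∧ (q.2 : Fin 4 → ℝ) = (p.2 : Fin 4 → ℝ) ∘ ⇑σ.symm

/-- The underlying space of the triangulation. -/
def Tri.Space (T : Tri) : Type := Quot T.spaceRel

instance (T : Tri) : TopologicalSpace T.Space :=
  inferInstanceAs (TopologicalSpace (Quot T.spaceRel))

def vpoint (v : Fin 4) : stdSimplex ℝ (Fin 4) :=
  ⟨fun j => if j = v then 1 else 0, by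
    refine ⟨fun j => ?_, by simp⟩
    dsimp only; split <;> norm_num⟩

def Tri.IsVertexPoint (T : Tri) (x : T.Space) : Prop :=
  ∃ (t : T.ι) (v : Fin 4), x = Quot.mk _ (t, vpoint v)

/-- The underlying space of the associated ideal triangulation: the space with
the vertices removed. -/
def Tri.IdealSpace (T : Tri) : Type := {x : T.Space // ¬ T.IsVertexPoint x}

instance (T : Tri) : TopologicalSpace T.IdealSpace :=
  inferInstanceAs (TopologicalSpace {x : T.Space // ¬ T.IsVertexPoint x})

/-- The link of a vertex of the triangulation, realized as the union of the
cross-section triangles at barycentric height `3/4` towards that vertex. -/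
def Tri.link (T : Tri) (V : T.VertClass) : Set T.Space :=
  {x | ∃ (t : T.ι) (v : Fin 4) (p : stdSimplex ℝ (Fin 4)),
      Quot.mk T.vertAdj (t, v) = V ∧ (p : Fin 4 → ℝ) v = 3/4 ∧ x = Quot.mk _ (t, p)}

noncomputable def Sphere2 : Type := Metric.sphere (0 : EuclideanSpace ℝ (Fin 3)) 1

noncomputable instance : TopologicalSpace Sphere2 :=
  inferInstanceAs (TopologicalSpace (Metric.sphere (0 : EuclideanSpace ℝ (Fin 3)) 1))

def Tri.HasSphericalLink (T : Tri) (V : T.VertClass) : Prop :=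
  Nonempty (T.link V ≃ₜ Sphere2)

/-! ### Canonical permutations -/

def p23 : Perm (Fin 4) := Equiv.swap 2 3
def p01 : Perm (Fin 4) := Equiv.swap 0 1
/-- the `3`-cycle `(1 3 2)` -/
def c132 : Perm (Fin 4) := Equiv.swap 1 3 * Equiv.swap 3 2
/-- the `3`-cycle `(1 2 3)` -/
def c123 : Perm (Fin 4) := Equiv.swap 1 2 * Equiv.swap 2 3
/-- the permutation `(0 1)(2 3)` -/
def c01x23 : Perm (Fin 4) := Equiv.swap 0 1 * Equiv.swap 2 3
/-- the `3`-cycle `(0 1 2)` -/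
def c012 : Perm (Fin 4) := Equiv.swap 0 1 * Equiv.swap 1 2
/-- the `3`-cycle `(0 1 3)` -/
def c013 : Perm (Fin 4) := Equiv.swap 0 1 * Equiv.swap 1 3
/-- the `4`-cycle `(0 3 1 2)` -/
def aV : Perm (Fin 4) := Equiv.swap 0 3 * Equiv.swap 3 1 * Equiv.swap 1 2
/-- the permutation `(0 3)(1 2)` -/
def gV : Perm (Fin 4) := Equiv.swap 0 3 * Equiv.swap 1 2

/-! ### The 2-3 move

A 2-3 move replaces two distinct model tetrahedra `tA, tB` of `T`, glued to each
other along a face, by three model tetrahedra `tP, tQ, tR` of `T'` arranged around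
a new edge joining the two vertices (apexes) of `tA`, `tB` not on the shared face.
`πA, …, πR` record (orientation-preserving) identifications of the model tetrahedra
involved with the labelled tetrahedra of the canonical local picture of the move:
for `tA` the apex is vertex `πA 0` and the shared face is `(tA, πA 0)`; the new
central edge of `T'` is the edge `{πP 0, πP 1}` of `tP`.  The data `ρ, μ, Φ, τ`
record how the tetrahedra, faces and face pairings away from the move are carried
from `T` to `T'`. -/

structure Move23 (T T' : Tri) : Type where
  tA : T.ι
  tB : T.ι
  hAB : tA ≠ tB
  πA : Perm (Fin 4)
  πB : Perm (Fin 4)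
  hsA : Perm.sign πA = 1
  hsB : Perm.sign πB = 1
  hglue : T.glue (tA, πA 0) = some ((tB, πB 0), πB * p23 * πA⁻¹)
  tP : T'.ι
  tQ : T'.ι
  tR : T'.ι
  hPQ : tP ≠ tQ
  hPR : tP ≠ tR
  hQR : tQ ≠ tR
  πP : Perm (Fin 4)
  πQ : Perm (Fin 4)
  πR : Perm (Fin 4)
  hsP : Perm.sign πP = 1
  hsQ : Perm.sign πQ = 1
  hsR : Perm.sign πR = 1
  hPQglue : T'.glue (tP, πP 2) = some ((tQ, πQ 3), πQ * p23 * πP⁻¹)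
  hQRglue : T'.glue (tQ, πQ 2) = some ((tR, πR 3), πR * p23 * πQ⁻¹)
  hRPglue : T'.glue (tR, πR 2) = some ((tP, πP 3), πP * p23 * πR⁻¹)
  ρ : {t : T.ι // t ≠ tA ∧ t ≠ tB} ≃ {s : T'.ι // s ≠ tP ∧ s ≠ tQ ∧ s ≠ tR}
  μ : T.ι → Perm (Fin 4)
  hμ : ∀ t, Perm.sign (μ t) = 1
  Φ : T.ι × Fin 4 → T'.ι × Fin 4
  τ : T.ι × Fin 4 → Perm (Fin 4)
  hΦout : ∀ (t : T.ι) (h : t ≠ tA ∧ t ≠ tB) (j : Fin 4),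
    Φ (t, j) = ((ρ ⟨t, h⟩).val, μ t j) ∧ τ (t, j) = μ t
  hΦA : ∀ k : Fin 4, k ≠ 0 →
    Φ (tA, πA k) = ![(tP, πP 1), (tQ, πQ 1), (tR, πR 1), (tP, πP 1)] k ∧
    τ (tA, πA k) = ![1, πQ * πA⁻¹, πR * c132 * πA⁻¹, πP * c123 * πA⁻¹] k
  hΦB : ∀ k : Fin 4, k ≠ 0 →
    Φ (tB, πB k) = ![(tQ, πQ 0), (tQ, πQ 0), (tP, πP 0), (tR, πR 0)] k ∧
    τ (tB, πB k) = ![1, πQ * c01x23 * πB⁻¹, πP * c012 * πB⁻¹, πR * c013 * πB⁻¹] k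
  hcompat : ∀ F G σ, F ≠ (tA, πA 0) → F ≠ (tB, πB 0) →
      T.glue F = some (G, σ) → T'.glue (Φ F) = some (Φ G, τ G * σ * (τ F)⁻¹)
  hcompat_none : ∀ F, F ≠ (tA, πA 0) → F ≠ (tB, πB 0) →
      T.glue F = none → T'.glue (Φ F) = none

/-- The new central (degree three) edge of a 2-3 move, as a model edge of `T'`. -/
def Move23.centralEdge {T T' : Tri} (m : Move23 T T') : T'.ModelEdge :=
  (m.tP, epair (m.πP 0) (m.πP 1) (m.πP.injective.ne (by decide)))

/-- Correspondence between (model) edges of `T` and of `T'` under a 2-3 move: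
every model edge not on the central edge survives, carried by the face
correspondence `Φ, τ` through any face containing it that is not the disappearing
shared face. -/
def Move23.edgeCorr {T T' : Tri} (m : Move23 T T') :
    T.ModelEdge → T'.ModelEdge → Prop := fun e f =>
  ∃ i : Fin 4, i ∉ e.2.1 ∧ (e.1, i) ≠ (m.tA, m.πA 0) ∧ (e.1, i) ≠ (m.tB, m.πB 0) ∧
    f.1 = (m.Φ (e.1, i)).1 ∧ f.2 = e.2.map (m.τ (e.1, i))

/-- `T` and `T'` are related by a 2-3 move. -/
def Pachner23 (T T' : Tri) : Prop := Nonempty (Move23 T T')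

/-- `T` and `T'` are related by a 2-3 move or by a 3-2 move. -/
def PachnerStep (T T' : Tri) : Prop := Pachner23 T T' ∨ Pachner23 T' T

/-- connectivity by a sequence of 2-3 and 3-2 moves -/
def MovePath (T T' : Tri) : Prop :=
  ∃ (N : ℕ) (seq : Fin (N + 1) → Tri), seq 0 = T ∧ seq (Fin.last N) = T' ∧
    ∀ k : Fin N, PachnerStep (seq k.castSucc) (seq k.succ)

/-- connectivity by a sequence of 2-3 and 3-2 moves in which no triangulation,
including the two endpoints, has a degree one edge -/
def NoDegOnePath (T T' : Tri) : Prop :=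
  ∃ (N : ℕ) (seq : Fin (N + 1) → Tri), seq 0 = T ∧ seq (Fin.last N) = T' ∧
    (∀ k, ¬ (seq k).HasDegOneEdge) ∧
    ∀ k : Fin N, PachnerStep (seq k.castSucc) (seq k.succ)

end Paper

open Paper Equiv

/-!
If one of the four edges had degree at most two, its only model edges would be its copy in `tU`
and its copy in `tV` across the face of `tU` glued by `σ = πV * p01 * πU⁻¹`. The other face of
`tU` through the edge then has to be glued to `tV` as well, and since both gluings reverse
orientation, by the same map `σ`. So the three faces of `tU` at the endpoint `πU 0` or `πU 1` of
the edge are all glued to `tV` by `σ`. The class of that vertex then consists of its copies in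
`tU` and `tV` only, so `𝒯` has more than one vertex, and its link is two triangles glued along
their boundaries, a sphere.

The homeomorphism of that link with `S²` sends the two triangles onto the two halves of the
boundary of a double pyramid around `0 ∈ ℝ³` and then projects radially.
-/

theorem Equiv.Perm.eq_one_of_sign_eq_one_of_fixes_two {ρ : Perm (Fin 4)}
    (hρ : Perm.sign ρ = 1) {i j : Fin 4} (hij : i ≠ j) (hi : ρ i = i) (hj : ρ j = j) : ρ = 1 := by
  have key : ∀ i j : Fin 4, i ≠ j → ∀ ρ : Perm (Fin 4), Perm.sign ρ = 1 → ρ i = i → ρ j = j →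
      ρ = 1 := by decide
  exact key i j hij ρ hρ hi hj

section stdSimplex

variable {S X : Type*} [Semiring S] [PartialOrder S] [IsOrderedRing S] [Fintype X] [DecidableEq X]

theorem stdSimplex.map_perm_apply (σ : Perm X) (p : stdSimplex S X) (x : X) :
    stdSimplex.map σ p x = p (σ⁻¹ x) := by
  rw [stdSimplex.map_coe, FunOnFinite.linearMap_apply_apply]
  convert Finset.sum_singleton (⇑p) (σ⁻¹ x)
  ext y
  simp [eq_comm, Equiv.eq_symm_apply, Perm.inv_def]

theorem stdSimplex.map_perm_map_inv (σ : Perm X) (p : stdSimplex S X) :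
    stdSimplex.map σ (stdSimplex.map (σ⁻¹ : Perm X) p) = p := by
  ext x
  simp [stdSimplex.map_perm_apply]

end stdSimplex

namespace Paper

local notation "ℝ³" => EuclideanSpace ℝ (Fin 3)

instance : Finite EdgePair := inferInstanceAs (Finite {s : Finset (Fin 4) // s.card = 2})

instance (T : Tri) : Finite T.ModelEdge := inferInstanceAs (Finite (T.ι × EdgePair))

instance (T : Tri) : DiscreteTopology T.ι := ⟨rfl⟩

namespace EdgePair

theorem mem_map_iff (e : EdgePair) (π : Perm (Fin 4)) {x : Fin 4} :
    x ∈ (e.map π).1 ↔ π⁻¹ x ∈ e.1 := by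
  simp only [EdgePair.map, Finset.mem_image]
  constructor
  · rintro ⟨y, hy, rfl⟩
    simpa using hy
  · exact fun h => ⟨_, h, by simp⟩

theorem eq_or_eq_of_notMem (e : EdgePair) {i j x : Fin 4} (hi : i ∉ e.1) (hj : j ∉ e.1)
    (hij : i ≠ j) (hx : x ∉ e.1) : x = i ∨ x = j := by
  by_contra! h
  have := Finset.card_le_univ (insert x (insert i (insert j e.1)))
  rw [Finset.card_insert_of_notMem (by simp [h.1, h.2, hx]),
    Finset.card_insert_of_notMem (by simp [hij, hi]), Finset.card_insert_of_notMem hj, e.2] at this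
  simp at this

theorem perm_eq_of_map_eq (e : EdgePair) {i j : Fin 4} (hi : i ∉ e.1) (hj : j ∉ e.1)
    (hij : i ≠ j) {σ τ : Perm (Fin 4)} (hsign : Perm.sign τ = Perm.sign σ)
    (hmap : e.map τ = e.map σ) (hτj : τ j = σ j) : τ = σ := by
  have hmem (x : Fin 4) : (σ⁻¹ * τ) x ∈ e.1 ↔ x ∈ e.1 := by
    rw [Perm.mul_apply, ← e.mem_map_iff, ← hmap, e.mem_map_iff]
    simp
  have hρj : (σ⁻¹ * τ) j = j := by simp [hτj]
  have hρi : (σ⁻¹ * τ) i = i := by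
    refine (e.eq_or_eq_of_notMem hi hj hij ((hmem i).not.mpr hi)).resolve_right fun h => hij ?_
    exact (σ⁻¹ * τ).injective (h.trans hρj.symm)
  have := Perm.eq_one_of_sign_eq_one_of_fixes_two (by simp [hsign]) hij hρi hρj
  rwa [inv_mul_eq_one, eq_comm] at this

end EdgePair

-- The triangle `a + b + c = 1/4`, `a, b, c ≥ 0`, goes to the upper (`up`) or lower half of the
-- boundary of a double pyramid around `0`; the two halves agree where `min a (min b c) = 0`.
noncomputable def tent (a b c : ℝ) (up : Bool) : ℝ³ :=
  !₂[a - 1/12, b - 1/12, (if up then 12 else -12) * min a (min b c)]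

section Tent

variable {a b c a' b' c' : ℝ}

theorem continuous_tent {X : Type*} [TopologicalSpace X] {f g h : X → ℝ} (hf : Continuous f)
    (hg : Continuous g) (hh : Continuous h) (up : Bool) :
    Continuous fun x => tent (f x) (g x) (h x) up := by
  refine (PiLp.continuous_toLp _ _).comp (continuous_pi fun i => ?_)
  fin_cases i <;> cases up <;> simp <;> fun_prop

theorem min_min_eq_zero_iff (ha : 0 ≤ a) (hb : 0 ≤ b) (hc : 0 ≤ c) :
    min a (min b c) = 0 ↔ a = 0 ∨ b = 0 ∨ c = 0 := by
  constructor
  · intro h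
    rcases min_choice a (min b c) with h' | h' <;> rw [h'] at h
    · exact Or.inl h
    · rcases min_choice b c with h'' | h'' <;> rw [h''] at h <;> simp [h]
  · rintro (rfl | rfl | rfl) <;> simp [*]

theorem tent_ne_zero (hs : a + b + c = 1/4) (up : Bool) : tent a b c up ≠ 0 := by
  intro h
  have h0 := congrArg (· 0) h
  have h1 := congrArg (· 1) h
  have h2 := congrArg (· 2) h
  simp [tent] at h0 h1 h2
  obtain rfl : a = 1/12 := by linarith
  obtain rfl : b = 1/12 := by linarith
  obtain rfl : c = 1/12 := by linarith
  cases up <;> norm_num at h2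

theorem tent_eq_tent (ha : 0 ≤ a) (hb : 0 ≤ b) (hc : 0 ≤ c) (h : a = 0 ∨ b = 0 ∨ c = 0)
    (up up' : Bool) : tent a b c up = tent a b c up' := by
  simp [tent, (min_min_eq_zero_iff ha hb hc).mpr h]

theorem eq_of_tent_eq_smul (ha : 0 ≤ a) (hb : 0 ≤ b) (hc : 0 ≤ c) (ha' : 0 ≤ a') (hb' : 0 ≤ b')
    (hc' : 0 ≤ c') (hs : a + b + c = 1/4) (hs' : a' + b' + c' = 1/4) {l : ℝ} (hl : 0 < l)
    {up up' : Bool} (h : tent a b c up = l • tent a' b' c' up') :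
    a = a' ∧ b = b' ∧ c = c' ∧ (up = up' ∨ a = 0 ∨ b = 0 ∨ c = 0) := by
  have h0 := congrArg (· 0) h
  have h1 := congrArg (· 1) h
  have h2 := congrArg (· 2) h
  simp only [tent, PiLp.smul_apply, PiLp.toLp_apply, Matrix.cons_val, smul_eq_mul] at h0 h1 h2
  have h3 : c - 1/12 = l * (c' - 1/12) := by linear_combination hs - l * hs' - h0 - h1
  have hmin : min a (min b c) = l * min a' (min b' c') + (1 - l) / 12 := by
    rw [show a = l * a' + (1 - l) / 12 by linarith, show b = l * b' + (1 - l) / 12 by linarith,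
      show c = l * c' + (1 - l) / 12 by linarith, min_add_add_right, min_add_add_right,
      ← mul_min_of_nonneg _ _ hl.le, ← mul_min_of_nonneg _ _ hl.le]
  have hm : 0 ≤ min a (min b c) := le_min ha (le_min hb hc)
  have hm' : 0 ≤ l * min a' (min b' c') := mul_nonneg hl.le (le_min ha' (le_min hb' hc'))
  obtain ⟨rfl, hup⟩ : l = 1 ∧ (up = up' ∨ min a (min b c) = 0) := by
    cases up <;> cases up' <;> simp only [if_true, if_false, Bool.false_eq_true] at h2 <;>
      first
      | exact ⟨by linarith, Or.inl rfl⟩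
      | exact ⟨by linarith, Or.inr (by linarith)⟩
  exact ⟨by linarith, by linarith, by linarith, hup.imp_right (min_min_eq_zero_iff ha hb hc).mp⟩

theorem exists_tent_eq_smul {s : ℝ³} (hs : s ≠ 0) :
    ∃ a b c up, ∃ l : ℝ, 0 ≤ a ∧ 0 ≤ b ∧ 0 ≤ c ∧ a + b + c = 1/4 ∧ 0 < l ∧
      tent a b c up = l • s := by
  set μ := min (s 0) (min (s 1) (-(s 0 + s 1)))
  have hμ0 : μ ≤ s 0 := min_le_left _ _
  have hμ1 : μ ≤ s 1 := (min_le_right _ _).trans (min_le_left _ _)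
  have hμ2 : μ ≤ -(s 0 + s 1) := (min_le_right _ _).trans (min_le_right _ _)
  have hD : 0 < |s 2| - 12 * μ := by
    by_contra! hD
    apply hs
    have h2 : s 2 = 0 := abs_eq_zero.mp (by linarith [abs_nonneg (s 2)])
    ext i
    fin_cases i <;> simp [h2] <;> linarith [abs_nonneg (s 2)]
  set l := (|s 2| - 12 * μ)⁻¹
  have hl : 0 < l := inv_pos.mpr hD
  have hlμ : 1/12 + l * μ = l * |s 2| / 12 := by
    have : l * (|s 2| - 12 * μ) = 1 := inv_mul_cancel₀ hD.ne'
    linear_combination (-1/12 : ℝ) * this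
  have hmin : min (1/12 + l * s 0) (min (1/12 + l * s 1) (1/12 + l * -(s 0 + s 1))) =
      l * |s 2| / 12 := by
    rw [min_add_add_left, min_add_add_left, ← mul_min_of_nonneg _ _ hl.le,
      ← mul_min_of_nonneg _ _ hl.le, hlμ]
  have hl2 : 0 ≤ l * |s 2| / 12 := by positivity
  refine ⟨1/12 + l * s 0, 1/12 + l * s 1, 1/12 + l * -(s 0 + s 1), decide (0 ≤ s 2), l,
    ?_, ?_, ?_, by ring, hl, ?_⟩
  · nlinarith [mul_le_mul_of_nonneg_left hμ0 hl.le]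
  · nlinarith [mul_le_mul_of_nonneg_left hμ1 hl.le]
  · nlinarith [mul_le_mul_of_nonneg_left hμ2 hl.le]
  · ext i
    fin_cases i
    · simp [tent]
    · simp [tent]
    · simp only [tent, hmin]
      rcases le_or_gt 0 (s 2) with h | h
      · simp [h, abs_of_nonneg h]; ring
      · simp [h.not_ge, abs_of_neg h]; ring

end Tent

section LinkTent

variable {k : Fin 4} {p p' : stdSimplex ℝ (Fin 4)}

-- `swap 0 k 1, swap 0 k 2, swap 0 k 3` list the vertices of a model tetrahedron other than `k`.
noncomputable def linkTent (k : Fin 4) (up : Bool) (p : stdSimplex ℝ (Fin 4)) : ℝ³ :=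
  tent (p (swap 0 k 1)) (p (swap 0 k 2)) (p (swap 0 k 3)) up

theorem ne_iff_eq_swap (k i : Fin 4) :
    i ≠ k ↔ i = swap 0 k 1 ∨ i = swap 0 k 2 ∨ i = swap 0 k 3 := by
  revert k i
  decide

theorem apply_add_apply_swap_eq_one (k : Fin 4) (p : stdSimplex ℝ (Fin 4)) :
    p k + (p (swap 0 k 1) + p (swap 0 k 2) + p (swap 0 k 3)) = 1 := by
  rw [← stdSimplex.sum_eq_one p, ← Equiv.sum_comp (swap 0 k), Fin.sum_univ_four, swap_apply_left]
  ring

theorem continuous_linkTent (k : Fin 4) (up : Bool) : Continuous (linkTent k up) := by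
  have (i : Fin 4) : Continuous fun p : stdSimplex ℝ (Fin 4) => p i :=
    (continuous_apply i).comp continuous_subtype_val
  exact continuous_tent (this _) (this _) (this _) up

theorem linkTent_ne_zero (hp : p k = 3/4) (up : Bool) : linkTent k up p ≠ 0 :=
  tent_ne_zero (by linarith [apply_add_apply_swap_eq_one k p]) up

theorem linkTent_eq_linkTent (h : ∃ i ≠ k, p i = 0) (up up' : Bool) :
    linkTent k up p = linkTent k up' p := by
  obtain ⟨i, hi, hpi⟩ := h
  refine tent_eq_tent (stdSimplex.zero_le p _) (stdSimplex.zero_le p _) (stdSimplex.zero_le p _)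
    ?_ up up'
  rcases (ne_iff_eq_swap k i).mp hi with rfl | rfl | rfl <;> simp [hpi]

theorem eq_of_linkTent_eq_smul (hp : p k = 3/4) (hp' : p' k = 3/4) {l : ℝ} (hl : 0 < l)
    {up up' : Bool} (h : linkTent k up p = l • linkTent k up' p') :
    p = p' ∧ (up = up' ∨ ∃ i ≠ k, p i = 0) := by
  obtain ⟨h1, h2, h3, hup⟩ := eq_of_tent_eq_smul (stdSimplex.zero_le p _)
    (stdSimplex.zero_le p _) (stdSimplex.zero_le p _) (stdSimplex.zero_le p' _)
    (stdSimplex.zero_le p' _) (stdSimplex.zero_le p' _)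
    (by linarith [apply_add_apply_swap_eq_one k p])
    (by linarith [apply_add_apply_swap_eq_one k p']) hl h
  refine ⟨stdSimplex.ext (funext fun i => ?_), hup.imp_right fun h0 => ?_⟩
  · by_cases hi : i = k
    · rw [hi, hp, hp']
    · rcases (ne_iff_eq_swap k i).mp hi with rfl | rfl | rfl <;> assumption
  · have hne (j : Fin 4) (hj : j ≠ 0) : swap 0 k j ≠ k := fun h =>
      hj ((swap 0 k).injective (h.trans (swap_apply_left 0 k).symm))
    rcases h0 with h0 | h0 | h0 <;> exact ⟨_, hne _ (by decide), h0⟩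

theorem exists_linkTent_eq_smul (k : Fin 4) {s : ℝ³} (hs : s ≠ 0) :
    ∃ up p, ∃ l : ℝ, p k = 3/4 ∧ 0 < l ∧ linkTent k up p = l • s := by
  obtain ⟨a, b, c, up, l, ha, hb, hc, habc, hl, h⟩ := exists_tent_eq_smul hs
  have hq : ∀ j, 0 ≤ ![3/4, a, b, c] j := by
    intro j; fin_cases j <;> simp [ha, hb, hc]; norm_num
  let p : stdSimplex ℝ (Fin 4) := ⟨fun j => ![3/4, a, b, c] (swap 0 k j), fun j => hq _, by
    rw [Equiv.sum_comp (swap 0 k) (fun j => ![(3/4 : ℝ), a, b, c] j), Fin.sum_univ_four]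
    simp only [Matrix.cons_val]
    linarith⟩
  have hp (j : Fin 4) : p (swap 0 k j) = ![3/4, a, b, c] j := by
    show ![3/4, a, b, c] (swap 0 k (swap 0 k j)) = _
    rw [swap_apply_self]
  refine ⟨up, p, l, by simpa using hp 0, hl, ?_⟩
  simpa [linkTent, hp] using h

end LinkTent

theorem nonempty_homeomorph_sphere2 {X : Type*} [TopologicalSpace X] [CompactSpace X]
    {f : X → ℝ³} (hf : Continuous f) (hf0 : ∀ x, f x ≠ 0)
    (hinj : ∀ x y, ∀ l : ℝ, 0 < l → f x = l • f y → x = y)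
    (hsurj : ∀ s : ℝ³, s ≠ 0 → ∃ x, ∃ l : ℝ, 0 < l ∧ f x = l • s) :
    Nonempty (X ≃ₜ Sphere2) := by
  have : T2Space Sphere2 := inferInstanceAs (T2Space (Metric.sphere (0 : ℝ³) 1))
  let g : X → Sphere2 := fun x => ⟨‖f x‖⁻¹ • f x, by simp [norm_smul, hf0 x]⟩
  have hg : Continuous g :=
    ((hf.norm.inv₀ fun x => norm_ne_zero_iff.mpr (hf0 x)).smul hf).subtype_mk _
  have hg_inj : g.Injective := by
    intro x y hxy
    have hxy : ‖f x‖⁻¹ • f x = ‖f y‖⁻¹ • f y := congrArg Subtype.val hxy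
    refine hinj x y (‖f x‖ / ‖f y‖)
      (div_pos (norm_pos_iff.mpr (hf0 x)) (norm_pos_iff.mpr (hf0 y))) ?_
    rw [div_eq_mul_inv, mul_smul, ← hxy, smul_smul,
      mul_inv_cancel₀ (norm_ne_zero_iff.mpr (hf0 x)), one_smul]
  have hg_surj : g.Surjective := by
    rintro ⟨s, hs⟩
    have hs1 : ‖s‖ = 1 := mem_sphere_zero_iff_norm.mp hs
    obtain ⟨x, l, hl, hx⟩ := hsurj s (norm_ne_zero_iff.mp (by rw [hs1]; norm_num))
    refine ⟨x, Subtype.ext ?_⟩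
    simp only [g, hx, norm_smul, hs1, Real.norm_eq_abs, abs_of_pos hl, mul_one, smul_smul,
      inv_mul_cancel₀ hl.ne', one_smul]
  exact ⟨hg.homeoOfEquivCompactToT2 (f := Equiv.ofBijective g ⟨hg_inj, hg_surj⟩)⟩

namespace Tri

theorem glue_eq_some_apply (T : Tri) {F G : T.ι × Fin 4} {σ : Perm (Fin 4)}
    (h : T.glue F = some (G, σ)) : T.glue F = some ((G.1, σ F.2), σ) := by
  rw [h, T.glue_vertex _ _ _ h]

theorem three_le_degree (T : Tri) {e f g : T.ModelEdge} (hf : T.edgeOf f = T.edgeOf e)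
    (hg : T.edgeOf g = T.edgeOf e) (hef : e ≠ f) (heg : e ≠ g) (hfg : f ≠ g) :
    3 ≤ T.degree (T.edgeOf e) := by
  let x : Fin 3 → {x : T.ModelEdge // T.edgeOf x = T.edgeOf e} := ![⟨e, rfl⟩, ⟨f, hf⟩, ⟨g, hg⟩]
  have hx : Function.Injective x := by
    intro a b hab
    fin_cases a <;> fin_cases b <;> simp_all [x, Subtype.ext_iff, eq_comm]
  simpa [degree] using Nat.card_le_card_of_injective x hx

variable {T : Tri} {u v : T.ι} {k : Fin 4} {σ : Perm (Fin 4)}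

theorem glue_eq_of_degree_le_two (hb : T.Boundaryless) (huv : u ≠ v) {e : EdgePair}
    {i j : Fin 4} (hi : i ∉ e.1) (hj : j ∉ e.1) (hij : i ≠ j)
    (hσ : T.glue (u, i) = some ((v, σ i), σ)) (hdeg : T.degree (T.edgeOf (u, e)) ≤ 2) :
    T.glue (u, j) = some ((v, σ j), σ) := by
  obtain ⟨⟨⟨t, _⟩, τ⟩, hτ⟩ := Option.ne_none_iff_exists'.mp (hb (u, j))
  replace hτ : T.glue (u, j) = some ((t, τ j), τ) := T.glue_eq_some_apply hτ
  have adj_σ : T.edgeAdj (u, e) (v, e.map σ) := ⟨i, _, σ, hi, hσ, rfl, rfl⟩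
  have adj_τ : T.edgeAdj (u, e) (t, e.map τ) := ⟨j, _, τ, hj, hτ, rfl, rfl⟩
  obtain h | h : (t, e.map τ) = (u, e) ∨ (t, e.map τ) = (v, e.map σ) := by
    by_contra! h
    have := T.three_le_degree (Quot.sound adj_σ).symm (Quot.sound adj_τ).symm
      (fun h => huv (congrArg Prod.fst h)) h.1.symm h.2.symm
    omega
  · exfalso
    obtain ⟨rfl, he⟩ := Prod.mk.inj h
    have hτj : τ j ∉ e.1 := by rw [← he, e.mem_map_iff]; simpa using hj
    rcases e.eq_or_eq_of_notMem hi hj hij hτj with h' | h'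
    · have := T.glue_symm _ _ _ hτ
      rw [h', hσ] at this
      exact huv (congrArg (Prod.fst ∘ Prod.fst) (Option.some.inj this)).symm
    · exact T.glue_ne _ _ hτ (by rw [h'])
  · obtain ⟨rfl, he⟩ := Prod.mk.inj h
    have hτj : τ j = σ j := by
      have hj' : σ⁻¹ (τ j) ∉ e.1 := by rw [← e.mem_map_iff, ← he, e.mem_map_iff]; simpa using hj
      refine Perm.inv_eq_iff_eq.mp ((e.eq_or_eq_of_notMem hi hj hij hj').resolve_left fun h' => ?_)
      rw [Perm.inv_eq_iff_eq] at h'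
      have := T.glue_symm _ _ _ hτ
      rw [h', T.glue_symm _ _ _ hσ] at this
      exact hij (congrArg (Prod.snd ∘ Prod.fst) (Option.some.inj this))
    have hτσ := e.perm_eq_of_map_eq hi hj hij
      (by rw [T.glue_orient _ _ _ hσ, T.glue_orient _ _ _ hτ]) he hτj
    rw [hτ, hτσ]

variable (T u v k σ) in
def GluedAround : Prop :=
  ∀ i, i ≠ k → T.glue (u, i) = some ((v, σ i), σ)

theorem gluedAround_of_perm {π : Perm (Fin 4)}
    (h : ∀ m, m ≠ 0 → T.glue (u, π m) = some ((v, σ (π m)), σ)) :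
    T.GluedAround u v (π 0) σ := by
  intro i hi
  obtain ⟨m, rfl⟩ := π.surjective i
  exact h m (by rintro rfl; exact hi rfl)

-- The factor `z.2 k` makes the map vanish on the face opposite the vertex `k` of `u`, so that it
-- respects the gluings of the faces that are not controlled by `GluedAround`.
variable (T u v k σ) in
noncomputable def pillowMap (z : T.Pt) : ℝ³ :=
  if z.1 = u then z.2 k • linkTent k true z.2
  else if z.1 = v then z.2 (σ k) • linkTent k false (stdSimplex.map (σ⁻¹ : Perm (Fin 4)) z.2)
  else 0

theorem continuous_pillowMap : Continuous (T.pillowMap u v k σ) := by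
  refine continuous_prod_of_discrete_left.mpr fun t => ?_
  have (i : Fin 4) : Continuous fun p : stdSimplex ℝ (Fin 4) => p i :=
    (continuous_apply i).comp continuous_subtype_val
  dsimp only [pillowMap]
  split_ifs
  · exact (this k).smul (continuous_linkTent k true)
  · exact (this _).smul ((continuous_linkTent k false).comp (stdSimplex.continuous_map _))
  · exact continuous_const

theorem pillowMap_left (p : stdSimplex ℝ (Fin 4)) :
    T.pillowMap u v k σ (u, p) = p k • linkTent k true p :=
  if_pos rfl

theorem pillowMap_right (huv : u ≠ v) (p : stdSimplex ℝ (Fin 4)) :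
    T.pillowMap u v k σ (v, stdSimplex.map σ p) = p k • linkTent k false p := by
  have hmap : stdSimplex.map (σ⁻¹ : Perm (Fin 4)) (stdSimplex.map σ p) = p := by
    simpa using stdSimplex.map_perm_map_inv σ⁻¹ p
  dsimp only [pillowMap]
  rw [if_neg huv.symm, if_pos rfl, hmap, stdSimplex.map_perm_apply, Perm.inv_def, symm_apply_apply]

theorem pillowMap_eq_zero {t : T.ι} {i : Fin 4} {p : stdSimplex ℝ (Fin 4)} (hu : t = u → i = k)
    (hv : t = v → i = σ k) (hp : p i = 0) : T.pillowMap u v k σ (t, p) = 0 := by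
  unfold pillowMap
  split_ifs with h₁ h₂
  · rw [← hu h₁, hp, zero_smul]
  · rw [← hv h₂, hp, zero_smul]
  · rfl

theorem pillowMap_left_eq_right (huv : u ≠ v) {p : stdSimplex ℝ (Fin 4)}
    (hp : ∃ i ≠ k, p i = 0) :
    T.pillowMap u v k σ (u, p) = T.pillowMap u v k σ (v, stdSimplex.map σ p) := by
  rw [pillowMap_left, pillowMap_right huv, linkTent_eq_linkTent hp]

variable (T u v σ) in
noncomputable def pillowPoint : Bool → stdSimplex ℝ (Fin 4) → T.Space
  | true, p => Quot.mk _ (u, p)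
  | false, p => Quot.mk _ (v, stdSimplex.map σ p)

theorem continuous_pillowPoint :
    Continuous fun x : Bool × stdSimplex ℝ (Fin 4) => T.pillowPoint u v σ x.1 x.2 := by
  refine continuous_prod_of_discrete_left.mpr fun b => ?_
  cases b
  · exact continuous_quot_mk.comp (continuous_const.prodMk (stdSimplex.continuous_map _))
  · exact continuous_quot_mk.comp (continuous_const.prodMk continuous_id)

namespace GluedAround

theorem symm (H : T.GluedAround u v k σ) : T.GluedAround v u (σ k) σ⁻¹ := by
  intro j hj
  have hj' : σ⁻¹ j ≠ k := fun h => hj (by rw [← h]; simp)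
  simpa using T.glue_symm _ _ _ (H _ hj')

theorem eq_of_vertAdj_left (H : T.GluedAround u v k σ) {w : T.ι × Fin 4}
    (h : T.vertAdj (u, k) w) : w = (v, σ k) := by
  obtain ⟨i, G, τ, hi, hglue, rfl⟩ := h
  rw [H i hi] at hglue
  cases hglue
  rfl

theorem eq_of_vertAdj_right (H : T.GluedAround u v k σ) {w : T.ι × Fin 4}
    (h : T.vertAdj w (u, k)) : w = (v, σ k) := by
  obtain ⟨i, ⟨t, l⟩, τ, hi, hglue, hw⟩ := h
  obtain ⟨rfl, hk⟩ := Prod.mk.inj hw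
  have hl : l ≠ k := by
    rw [hk, ← show τ i = l from T.glue_vertex _ _ _ hglue]
    exact τ.injective.ne hi
  have := T.glue_symm _ _ _ hglue
  rw [H l hl] at this
  cases this
  simp [hk]

theorem mk_eq_iff (H : T.GluedAround u v k σ) {w : T.ι × Fin 4} :
    Quot.mk T.vertAdj w = Quot.mk T.vertAdj (u, k) ↔ w = (u, k) ∨ w = (v, σ k) := by
  constructor
  · intro h
    have closed : ∀ x y, T.vertAdj x y →
        ((x = (u, k) ∨ x = (v, σ k)) ↔ (y = (u, k) ∨ y = (v, σ k))) := by
      rintro x y hxy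
      constructor
      · rintro (rfl | rfl)
        · exact Or.inr (H.eq_of_vertAdj_left hxy)
        · exact Or.inl (by simpa using H.symm.eq_of_vertAdj_left hxy)
      · rintro (rfl | rfl)
        · exact Or.inr (H.eq_of_vertAdj_right hxy)
        · exact Or.inl (by simpa using H.symm.eq_of_vertAdj_right hxy)
    exact (congrArg (Quot.lift _ fun x y hxy => propext (closed x y hxy)) h).to_iff.mpr
      (Or.inl rfl)
  · rintro (rfl | rfl)
    · rfl
    · obtain ⟨i, hi⟩ := exists_ne k
      exact (Quot.sound ⟨i, _, σ, hi, H i hi, rfl⟩).symm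

theorem vertexCount_ne_one (huv : u ≠ v) (H : T.GluedAround u v k σ) : T.vertexCount ≠ 1 := by
  intro h
  have : Subsingleton T.VertClass := (Nat.card_eq_one_iff_unique.mp h).1
  obtain ⟨i, hi⟩ := exists_ne k
  rcases H.mk_eq_iff.mp (Subsingleton.elim (α := T.VertClass) (Quot.mk _ (u, i)) _) with h | h
  · exact hi (congrArg Prod.snd h)
  · exact huv (congrArg Prod.fst h)

theorem pillowMap_eq_zero_of_glue (H : T.GluedAround u v k σ) {t s : T.ι} {i j : Fin 4}
    {τ : Perm (Fin 4)} {p : stdSimplex ℝ (Fin 4)} (hglue : T.glue (t, i) = some ((s, j), τ))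
    (hu : t = u → i = k) (hv : t = v → i = σ k) (hpi : p i = 0) :
    T.pillowMap u v k σ (s, stdSimplex.map τ p) = 0 := by
  have hG := T.glue_symm _ _ _ hglue
  have hsu : s = u → j = k := by
    rintro rfl
    by_contra hjk
    rw [H j hjk, Option.some.injEq, Prod.mk.injEq, Prod.mk.injEq] at hG
    obtain ⟨⟨hvt, hij⟩, -⟩ := hG
    exact σ.injective.ne hjk (hij.trans (hv hvt.symm))
  have hsv : s = v → j = σ k := by
    rintro rfl
    by_contra hjk
    rw [H.symm j hjk, Option.some.injEq, Prod.mk.injEq, Prod.mk.injEq] at hG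
    obtain ⟨⟨hut, hij⟩, -⟩ := hG
    exact hjk (by rw [← hu hut.symm, ← hij]; simp)
  refine pillowMap_eq_zero hsu hsv ?_
  rw [stdSimplex.map_perm_apply, ← show τ i = j from T.glue_vertex _ _ _ hglue]
  simpa using hpi

theorem pillowMap_eq_of_spaceRel (huv : u ≠ v) (H : T.GluedAround u v k σ) {x y : T.Pt}
    (hxy : T.spaceRel x y) : T.pillowMap u v k σ x = T.pillowMap u v k σ y := by
  obtain ⟨t, p⟩ := x
  obtain ⟨t', q⟩ := y
  obtain ⟨i, G, τ, hglue, hpi, rfl, hq⟩ := hxy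
  replace hq : q = stdSimplex.map τ p := by
    ext x; simp [hq, stdSimplex.map_perm_apply, Perm.inv_def]
  subst hq
  by_cases hu : t = u ∧ i ≠ k
  · obtain ⟨rfl, hik⟩ := hu
    rw [H i hik] at hglue
    cases hglue
    exact pillowMap_left_eq_right huv ⟨i, hik, hpi⟩
  by_cases hv : t = v ∧ i ≠ σ k
  · obtain ⟨rfl, hik⟩ := hv
    rw [H.symm i hik] at hglue
    cases hglue
    rw [← stdSimplex.map_perm_map_inv σ p, ← pillowMap_left_eq_right huv,
      stdSimplex.map_perm_map_inv]
    exact ⟨σ⁻¹ i, fun h => hik (by rw [← h]; simp), by simp [stdSimplex.map_perm_apply, hpi]⟩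
  simp only [not_and, not_not] at hu hv
  rw [pillowMap_eq_zero hu hv hpi, H.pillowMap_eq_zero_of_glue hglue hu hv hpi]

theorem lift_pillowPoint (huv : u ≠ v) (H : T.GluedAround u v k σ) (b : Bool)
    (p : stdSimplex ℝ (Fin 4)) :
    Quot.lift (T.pillowMap u v k σ) (fun _ _ => H.pillowMap_eq_of_spaceRel huv)
      (T.pillowPoint u v σ b p) = p k • linkTent k b p := by
  cases b
  exacts [pillowMap_right huv p, pillowMap_left p]

theorem pillowPoint_true_eq_false (H : T.GluedAround u v k σ) {p : stdSimplex ℝ (Fin 4)}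
    (hp : ∃ i ≠ k, p i = 0) : T.pillowPoint u v σ true p = T.pillowPoint u v σ false p := by
  obtain ⟨i, hi, hpi⟩ := hp
  refine Quot.sound ⟨i, _, σ, H i hi, hpi, rfl, ?_⟩
  ext x
  simp [stdSimplex.map_perm_apply, Perm.inv_def]

theorem mem_link_iff (H : T.GluedAround u v k σ) {x : T.Space} :
    x ∈ T.link (Quot.mk _ (u, k)) ↔ ∃ b p, p k = 3/4 ∧ T.pillowPoint u v σ b p = x := by
  constructor
  · rintro ⟨t, l, p, htl, hp, rfl⟩
    rcases H.mk_eq_iff.mp htl with h | h <;> obtain ⟨rfl, rfl⟩ := Prod.mk.inj h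
    · exact ⟨true, p, hp, rfl⟩
    · refine ⟨false, stdSimplex.map (σ⁻¹ : Perm (Fin 4)) p, ?_, ?_⟩
      · simpa [stdSimplex.map_perm_apply] using hp
      · simp only [pillowPoint, stdSimplex.map_perm_map_inv]
        rfl
  · rintro ⟨b, p, hp, rfl⟩
    cases b
    · refine ⟨v, σ k, _, H.mk_eq_iff.mpr (Or.inr rfl), ?_, rfl⟩
      simpa [stdSimplex.map_perm_apply, Perm.inv_def] using hp
    · exact ⟨u, k, p, rfl, hp, rfl⟩

theorem isCompact_link (H : T.GluedAround u v k σ) : IsCompact (T.link (Quot.mk _ (u, k))) := by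
  have hK : IsCompact {p : stdSimplex ℝ (Fin 4) | p k = 3/4} :=
    (isClosed_eq ((continuous_apply k).comp continuous_subtype_val) continuous_const).isCompact
  have hlink : T.link (Quot.mk _ (u, k)) =
      (fun x => T.pillowPoint u v σ x.1 x.2) '' (Set.univ ×ˢ {p | p k = 3/4}) := by
    ext x
    simp [H.mem_link_iff, and_comm]
  rw [hlink]
  exact (isCompact_univ.prod hK).image continuous_pillowPoint

theorem hasSphericalLink (huv : u ≠ v) (H : T.GluedAround u v k σ) :
    T.HasSphericalLink (Quot.mk _ (u, k)) := by
  have : CompactSpace (T.link (Quot.mk _ (u, k))) :=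
    isCompact_iff_compactSpace.mp H.isCompact_link
  let f : T.link (Quot.mk _ (u, k)) → ℝ³ := fun x =>
    Quot.lift (T.pillowMap u v k σ) (fun _ _ => H.pillowMap_eq_of_spaceRel huv) x.1
  have hf (b : Bool) (p : stdSimplex ℝ (Fin 4)) (hp : p k = 3/4) (hx) :
      f ⟨T.pillowPoint u v σ b p, hx⟩ = (3/4 : ℝ) • linkTent k b p := by
    rw [← hp]
    exact H.lift_pillowPoint huv b p
  refine nonempty_homeomorph_sphere2 (f := f)
    ((continuous_quot_lift _ continuous_pillowMap).comp continuous_subtype_val) ?_ ?_ ?_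
  · rintro ⟨x, hx⟩
    obtain ⟨b, p, hp, rfl⟩ := H.mem_link_iff.mp hx
    rw [hf b p hp]
    exact smul_ne_zero (by norm_num) (linkTent_ne_zero hp b)
  · rintro ⟨x, hx⟩ ⟨y, hy⟩ l hl hxy
    obtain ⟨b, p, hp, rfl⟩ := H.mem_link_iff.mp hx
    obtain ⟨b', p', hp', rfl⟩ := H.mem_link_iff.mp hy
    rw [hf b p hp, hf b' p' hp', smul_comm, smul_right_inj (by norm_num)] at hxy
    obtain ⟨rfl, hb⟩ := eq_of_linkTent_eq_smul hp hp' hl hxy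
    refine Subtype.ext ?_
    rcases hb with rfl | hface
    · rfl
    · have := H.pillowPoint_true_eq_false hface
      cases b <;> cases b' <;> simp_all
  · intro s hs
    obtain ⟨b, p, l, hp, hl, h⟩ := exists_linkTent_eq_smul k hs
    refine ⟨⟨_, H.mem_link_iff.mpr ⟨b, p, hp, rfl⟩⟩, 3/4 * l, by positivity, ?_⟩
    rw [hf b p hp, h, smul_smul]

end GluedAround

end Tri

end Paper

-- In the notation of the statement, `e = {πU 0, πU 1}`, `△ = (tU, πU 2)`, `e' = {πU 0, πU 3}`,
-- `e'' = {πU 1, πU 3}`, `ē' = {πU 0, πU 2}` and `ē'' = {πU 1, πU 2}`.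
/-- Let `𝒯` be a single-vertex triangulation of a closed oriented three-manifold,
or an ideal triangulation of an oriented three-manifold with no spherical
boundary components (no vertex has a spherical link), with no degree one edges.
Let `e` be a degree two edge whose two incident tetrahedra `tU ≠ tV` are glued
along the two faces containing `e` (the labelling is such that `e` is the edge
`{πU 0, πU 1}` of `tU`, the triangle `△` is the face `(tU, πU 2)` with other
edges `e' = {πU 0, πU 3}` and `e'' = {πU 1, πU 3}`, and the two tetrahedra are
also glued along the edges `ē' = {πU 0, πU 2}` and `ē'' = {πU 1, πU 2}`).
Then each of `e'`, `e''`, `ē'`, `ē''` has degree at least three. -/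
theorem edges_next_to_degree_two_edge_have_degree_three
    (T : Tri) (hb : T.Boundaryless)
    (hM : T.vertexCount = 1 ∨ ∀ V : T.VertClass, ¬ T.HasSphericalLink V)
    (tU tV : T.ι) (hne : tU ≠ tV) (πU πV : Perm (Fin 4))
    (h2 : T.glue (tU, πU 2) = some ((tV, πV 2), πV * p01 * πU⁻¹))
    (h3 : T.glue (tU, πU 3) = some ((tV, πV 3), πV * p01 * πU⁻¹)) :
    3 ≤ T.degree (T.edgeOf (tU, epair (πU 0) (πU 3) (πU.injective.ne (by decide)))) ∧
    3 ≤ T.degree (T.edgeOf (tU, epair (πU 1) (πU 3) (πU.injective.ne (by decide)))) ∧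
    3 ≤ T.degree (T.edgeOf (tU, epair (πU 0) (πU 2) (πU.injective.ne (by decide)))) ∧
    3 ≤ T.degree (T.edgeOf (tU, epair (πU 1) (πU 2) (πU.injective.ne (by decide)))) := by
  set σ := πV * p01 * πU⁻¹
  have g2 : T.glue (tU, πU 2) = some ((tV, σ (πU 2)), σ) := T.glue_eq_some_apply h2
  have g3 : T.glue (tU, πU 3) = some ((tV, σ (πU 3)), σ) := T.glue_eq_some_apply h3
  have not_glued (k : Fin 4) (H : T.GluedAround tU tV k σ) : False :=
    hM.elim (H.vertexCount_ne_one hne) fun h => h _ (H.hasSphericalLink hne)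
  have glued0 (g1 : T.glue (tU, πU 1) = some ((tV, σ (πU 1)), σ)) :
      T.GluedAround tU tV (πU 0) σ :=
    Tri.gluedAround_of_perm fun m hm => by fin_cases m; exacts [absurd rfl hm, g1, g2, g3]
  have glued1 (g0 : T.glue (tU, πU 0) = some ((tV, σ (πU 0)), σ)) :
      T.GluedAround tU tV (πU 1) σ := by
    have := Tri.gluedAround_of_perm (T := T) (π := πU * swap 0 1) (σ := σ)
      fun m hm => by fin_cases m; exacts [absurd rfl hm, g0, g2, g3]
    simpa using this
  refine ⟨?_, ?_, ?_, ?_⟩ <;> by_contra! hdeg <;> replace hdeg := Nat.le_of_lt_succ hdeg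
  · exact not_glued _ <| glued0 <|
      T.glue_eq_of_degree_le_two hb hne (by simp [epair]) (by simp [epair]) (by simp) g2 hdeg
  · exact not_glued _ <| glued1 <|
      T.glue_eq_of_degree_le_two hb hne (by simp [epair]) (by simp [epair]) (by simp) g2 hdeg
  · exact not_glued _ <| glued0 <|
      T.glue_eq_of_degree_le_two hb hne (by simp [epair]) (by simp [epair]) (by simp) g3 hdeg
  · exact not_glued _ <| glued1 <|
      T.glue_eq_of_degree_le_two hb hne (by simp [epair]) (by simp [epair]) (by simp) g3 hdeg
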